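/- Let M = (V, D) be a delta-matroid and v ∈ V. If d_M ≠ d_{M*v}, then the family of inclusion-minimal sets of M∂v is equicardinal. -/

import Mathlib

open scoped symmDiff

variable {V : Type*} [DecidableEq V] [Fintype V]

/-- Distance from `X` to the set system with family `D`. -/
noncomputable def dSS (D : Set (Finset V)) (X : Finset V) : ℕ :=
  sInf ((fun Y => (X ∆ Y).card) '' D)

/-- Pivot (twist) of a set-system family on `X`. -/
def pivotSS (D : Set (Finset V)) (X : Finset V) : Set (Finset V) :=
  (fun Y => Y ∆ X) '' D

/-- Loop complementation on `v`. -/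
def lcSS (D : Set (Finset V)) (v : V) : Set (Finset V) :=
  D ∆ ((fun Z => Z ∪ {v}) '' {Z ∈ D | v ∉ Z})

/-- Dual pivot on `v`. -/
def dpSS (D : Set (Finset V)) (v : V) : Set (Finset V) :=
  D ∆ ((fun Z => Z \ {v}) '' {Z ∈ D | v ∈ Z})

/-- Delta-matroid: proper set system with the symmetric exchange axiom. -/
def DeltaMatroid (D : Set (Finset V)) : Prop :=
  D.Nonempty ∧ ∀ X ∈ D, ∀ Y ∈ D, ∀ u ∈ X ∆ Y, ∃ v ∈ X ∆ Y, X ∆ {u, v} ∈ D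

/-- Inclusion-minimal members. -/
def minFam (D : Set (Finset V)) : Set (Finset V) :=
  {X ∈ D | ∀ Y ∈ D, Y ⊆ X → Y = X}

/-- Inclusion-maximal members. -/
def maxFam (D : Set (Finset V)) : Set (Finset V) :=
  {X ∈ D | ∀ Y ∈ D, X ⊆ Y → Y = X}

/-- Members of minimum cardinality. -/
def minCardFam (D : Set (Finset V)) : Set (Finset V) :=
  {X ∈ D | ∀ Y ∈ D, X.card ≤ Y.card}

/-- Members of maximum cardinality. -/
def maxCardFam (D : Set (Finset V)) : Set (Finset V) :=
  {X ∈ D | ∀ Y ∈ D, Y.card ≤ X.card}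

/-- All members have the same cardinality. -/
def Equicardinal (F : Set (Finset V)) : Prop :=
  ∀ X ∈ F, ∀ Y ∈ F, X.card = Y.card

/-- Restriction of the family to subsets of `X`. -/
def restrictSS (D : Set (Finset V)) (X : Finset V) : Set (Finset V) :=
  {Y ∈ D | Y ⊆ X}

/-! Every inclusion-minimal feasible set of a delta-matroid has minimum cardinality: among the
minimum-cardinality sets take `Y` closest to a minimal `X`; an exchange at `u ∈ Y \ X` would either
shrink `Y` or move it closer to `X`, so `Y ⊆ X` and hence `Y = X`.

Let `E` be whichever of `M`, `M*v` has the smaller `d`. A minimum set of `E` avoids `v` (removing `v`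
would give a set of `E*v` below `d_{E*v}`) and is not in `E*v`, so it is feasible in `M∂v`. Conversely
every feasible set of `M∂v` lies in `M ∪ M*v = E ∪ E*v`, so it contains a minimum set of `E`. Hence
every minimal set of `M∂v` is a minimum set of `E`, of cardinality `d_E`. -/

open Finset

section SymmDiff

variable {α : Type*} [DecidableEq α] {A : Finset α} {u w : α}

theorem card_symmDiff_pair_lt (hu : u ∈ A) (hw : w ∈ A) : #(A ∆ {u, w}) < #A := by
  have hsub : ({u, w} : Finset α) ⊆ A := insert_subset hu (singleton_subset_iff.2 hw)
  rw [symmDiff_of_ge hsub]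
  exact card_lt_card (sdiff_ssubset hsub (insert_nonempty u {w}))

theorem card_symmDiff_pair_le (hu : u ∈ A) : #(A ∆ {u, w}) ≤ #A :=
  calc #(A ∆ {u, w}) ≤ #(insert w (A.erase u)) := by
        refine card_le_card fun x hx => ?_
        simp only [mem_symmDiff, mem_insert, mem_singleton, mem_erase] at hx ⊢
        grind
    _ ≤ #(A.erase u) + 1 := card_insert_le w _
    _ = #A := card_erase_add_one hu

theorem symmDiff_singleton_of_notMem (hu : u ∉ A) : A ∆ {u} = insert u A := by
  rw [(disjoint_singleton_right.2 hu).symmDiff_eq_sup, sup_eq_union, union_singleton]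

end SymmDiff

section SetSystem

variable {α : Type*} {D E F : Set (Finset α)} {X Y Z : Finset α} {v : α}

theorem minCardFam_nonempty (hD : D.Nonempty) : (minCardFam D).Nonempty := by
  obtain ⟨X, hX, hmin⟩ := (InvImage.wf card wellFounded_lt).has_min D hD
  exact ⟨X, hX, fun Y hY => not_lt.1 (hmin Y hY)⟩

variable [DecidableEq α]

theorem mem_pivotSS : X ∈ pivotSS D Y ↔ X ∆ Y ∈ D :=
  ⟨by rintro ⟨W, hW, rfl⟩; rwa [symmDiff_symmDiff_cancel_right],
    fun hX => ⟨X ∆ Y, hX, symmDiff_symmDiff_cancel_right Y X⟩⟩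

theorem pivotSS_pivotSS (D : Set (Finset α)) (X : Finset α) : pivotSS (pivotSS D X) X = D := by
  ext Y
  rw [mem_pivotSS, mem_pivotSS, symmDiff_symmDiff_cancel_right]

theorem mem_pivotSS_singleton_of_notMem (hv : v ∉ X) : X ∈ pivotSS D {v} ↔ insert v X ∈ D := by
  rw [mem_pivotSS, symmDiff_singleton_of_notMem hv]

theorem DeltaMatroid.pivot (hD : DeltaMatroid D) (A : Finset α) : DeltaMatroid (pivotSS D A) := by
  obtain ⟨⟨W, hW⟩, hexch⟩ := hD
  refine ⟨⟨W ∆ A, W, hW, rfl⟩, fun X hX Y hY u hu => ?_⟩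
  have hXY : X ∆ A ∆ (Y ∆ A) = X ∆ Y := by
    rw [symmDiff_symmDiff_symmDiff_comm, symmDiff_self, symmDiff_bot]
  obtain ⟨w, hw, hXw⟩ := hexch _ (mem_pivotSS.1 hX) _ (mem_pivotSS.1 hY) u (hXY ▸ hu)
  exact ⟨w, hXY ▸ hw, mem_pivotSS.2 (by rwa [symmDiff_right_comm])⟩

theorem mem_image_sdiff_singleton :
    X ∈ (fun Z => Z \ {v}) '' {Z ∈ D | v ∈ Z} ↔ v ∉ X ∧ insert v X ∈ D := by
  constructor
  · rintro ⟨Z, ⟨hZ, hvZ⟩, rfl⟩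
    dsimp only
    rw [← erase_eq, insert_erase hvZ]
    exact ⟨notMem_erase v Z, hZ⟩
  · rintro ⟨hvX, hX⟩
    exact ⟨insert v X, ⟨hX, mem_insert_self v X⟩, by simp only [← erase_eq, erase_insert hvX]⟩

theorem mem_dpSS_of_mem (hv : v ∈ X) : X ∈ dpSS D v ↔ X ∈ D := by
  rw [dpSS, Set.mem_symmDiff, mem_image_sdiff_singleton]
  simp [hv]

theorem mem_dpSS_of_notMem (hv : v ∉ X) : X ∈ dpSS D v ↔ Xor (X ∈ D) (X ∈ pivotSS D {v}) := by
  rw [dpSS, Set.mem_symmDiff, mem_image_sdiff_singleton, mem_pivotSS_singleton_of_notMem hv]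
  simp [Xor, hv]

theorem dpSS_subset_union : dpSS D v ⊆ D ∪ pivotSS D {v} := by
  intro X hX
  by_cases hv : v ∈ X
  · exact Or.inl ((mem_dpSS_of_mem hv).1 hX)
  · exact ((mem_dpSS_of_notMem hv).1 hX).or

theorem dSS_empty (D : Set (Finset α)) : dSS D ∅ = sInf (card '' D) := by
  simp only [dSS, bot_eq_empty.symm, bot_symmDiff]

theorem dSS_empty_le_card (hY : Y ∈ D) : dSS D ∅ ≤ #Y :=
  dSS_empty D ▸ Nat.sInf_le ⟨Y, hY, rfl⟩

theorem card_eq_dSS_empty_of_mem_minCardFam (hX : X ∈ minCardFam D) : #X = dSS D ∅ :=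
  le_antisymm (dSS_empty D ▸ le_csInf ⟨_, X, hX.1, rfl⟩ (by rintro _ ⟨Y, hY, rfl⟩; exact hX.2 Y hY))
    (dSS_empty_le_card hX.1)

theorem DeltaMatroid.minFam_subset_minCardFam (hD : DeltaMatroid D) :
    minFam D ⊆ minCardFam D := by
  intro X hX
  obtain ⟨Y, hY, hclosest⟩ :=
    (InvImage.wf (fun Y => #(X ∆ Y)) wellFounded_lt).has_min _ (minCardFam_nonempty hD.1)
  suffices hYX : Y ⊆ X by rwa [← hX.2 Y hY.1 hYX]
  intro u huY
  by_contra huX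
  obtain ⟨w, hw, hYw⟩ := hD.2 Y hY.1 X hX.1 u (mem_symmDiff.2 (Or.inl ⟨huY, huX⟩))
  by_cases hwY : w ∈ Y
  · exact (card_symmDiff_pair_lt huY hwY).not_ge (hY.2 _ hYw)
  · have hY' : Y ∆ {u, w} ∈ minCardFam D :=
      ⟨hYw, fun Z hZ => (card_symmDiff_pair_le huY).trans (hY.2 Z hZ)⟩
    refine hclosest _ hY' ?_
    rw [symmDiff_comm] at hw
    change #(X ∆ (Y ∆ {u, w})) < #(X ∆ Y)
    rw [← symmDiff_assoc]
    exact card_symmDiff_pair_lt (mem_symmDiff.2 (Or.inr ⟨huY, huX⟩)) hw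

theorem DeltaMatroid.exists_mem_minCardFam_subset (hD : DeltaMatroid D) (hX : X ∈ D) :
    ∃ Z ∈ minCardFam D, Z ⊆ X := by
  obtain ⟨Z, hZX, hZ⟩ := exists_minimal_le_of_wellFoundedLT (· ∈ D) X hX
  exact ⟨Z, hD.minFam_subset_minCardFam ⟨hZ.1, fun Y hY hYZ => le_antisymm hYZ (hZ.2 hY hYZ)⟩,
    hZX⟩

theorem notMem_and_notMem_pivotSS_of_mem_minCardFam (hlt : dSS E ∅ < dSS (pivotSS E {v}) ∅)
    (hZ : Z ∈ minCardFam E) : v ∉ Z ∧ Z ∉ pivotSS E {v} := by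
  have hZd := card_eq_dSS_empty_of_mem_minCardFam hZ
  refine ⟨fun hv => ?_, fun hZ' => (dSS_empty_le_card hZ').not_gt (hZd ▸ hlt)⟩
  have hle := dSS_empty_le_card (show Z ∆ {v} ∈ pivotSS E {v} from ⟨Z, hZ.1, rfl⟩)
  have hlt' : #(Z ∆ {v}) < #Z := by simpa using card_symmDiff_pair_lt hv hv
  omega

theorem equicardinal_minFam_of_subset_union_pivotSS (hE : DeltaMatroid E)
    (hlt : dSS E ∅ < dSS (pivotSS E {v}) ∅) (hFE : F ⊆ E ∪ pivotSS E {v})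
    (hEF : ∀ X ∈ E, v ∉ X → X ∉ pivotSS E {v} → X ∈ F) : Equicardinal (minFam F) := by
  have hbelow : ∀ X ∈ F, ∃ Z ∈ F, Z ⊆ X ∧ #Z = dSS E ∅ := by
    intro X hX
    obtain ⟨W, hWE, hWX⟩ : ∃ W ∈ E, W ⊆ insert v X := by
      rcases hFE hX with hX | hX
      · exact ⟨X, hX, subset_insert v X⟩
      · refine ⟨X ∆ {v}, mem_pivotSS.1 hX, ?_⟩
        rw [← union_singleton]
        exact symmDiff_le_sup
    obtain ⟨Z, hZ, hZW⟩ := hE.exists_mem_minCardFam_subset hWE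
    obtain ⟨hvZ, hZE⟩ := notMem_and_notMem_pivotSS_of_mem_minCardFam hlt hZ
    exact ⟨Z, hEF Z hZ.1 hvZ hZE, (subset_insert_iff_of_notMem hvZ).1 (hZW.trans hWX),
      card_eq_dSS_empty_of_mem_minCardFam hZ⟩
  have hcard : ∀ X ∈ minFam F, #X = dSS E ∅ := by
    rintro X ⟨hXF, hXmin⟩
    obtain ⟨Z, hZF, hZX, hZ⟩ := hbelow X hXF
    rwa [← hXmin Z hZF hZX]
  exact fun X hX Y hY => (hcard X hX).trans (hcard Y hY).symm

end SetSystem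

/-- for a delta-matroid `M` and `v` with `d_M ≠ d_{M*v}`, the
inclusion-minimal sets of `M∂v` are equicardinal. -/
theorem min_dual_pivot_equicardinal (D : Set (Finset V)) (hDM : DeltaMatroid D)
    (v : V) (h : dSS D ∅ ≠ dSS (pivotSS D {v}) ∅) :
    Equicardinal (minFam (dpSS D v)) := by
  rcases h.lt_or_gt with hlt | hgt
  · exact equicardinal_minFam_of_subset_union_pivotSS hDM hlt dpSS_subset_union
      fun X hX hv hX' => (mem_dpSS_of_notMem hv).2 (Or.inl ⟨hX, hX'⟩)
  · have hD : pivotSS (pivotSS D {v}) {v} = D := pivotSS_pivotSS D {v}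
    refine equicardinal_minFam_of_subset_union_pivotSS (hDM.pivot {v}) (by rwa [hD]) ?_
      fun X hX hv hX' => (mem_dpSS_of_notMem hv).2 (Or.inr ⟨hX, by rwa [hD] at hX'⟩)
    rw [hD, Set.union_comm]
    exact dpSS_subset_union
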